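/- Let AF = (A, R) be a Dung argumentation framework and Γ_AF = A ∪ { a ↣ b : (a,b) ∈ R }. If I is an equilibrium model of Γ_AF, then S_I := { a ∈ A : I ⊨ a } is a stable extension of AF, i.e., S_I = A \ Defeated(S_I) where Defeated(S) = { a : ∃ b ∈ S, (b,a) ∈ R }. -/

import Mathlib

inductive Formula (Atom : Type) : Type
  | bot : Formula Atom
  | atom : Atom → Formula Atom
  | sneg : Formula Atom → Formula Atom
  | conj : Formula Atom → Formula Atom → Formula Atom
  | disj : Formula Atom → Formula Atom → Formula Atom
  | impl : Formula Atom → Formula Atom → Formula Atom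

structure NelsonInterp (Atom : Type) where
  W : Type
  le : W → W → Prop
  refl : ∀ w, le w w
  trans : ∀ {w₁ w₂ w₃}, le w₁ w₂ → le w₂ w₃ → le w₁ w₃
  Vp : W → Set Atom
  Vm : W → Set Atom
  monoP : ∀ {w w'}, le w w' → Vp w ⊆ Vp w'
  monoM : ∀ {w w'}, le w w' → Vm w ⊆ Vm w'

mutual
  def forceP {Atom : Type} (I : NelsonInterp Atom) (w : I.W) : Formula Atom → Prop
    | .bot => False
    | .atom a => a ∈ I.Vp w
    | .sneg φ => forceM I w φ
    | .conj φ ψ => forceP I w φ ∧ forceP I w ψ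
    | .disj φ ψ => forceP I w φ ∨ forceP I w ψ
    | .impl φ ψ => ∀ w', I.le w w' → (¬ forceP I w' φ ∨ forceP I w' ψ)
  def forceM {Atom : Type} (I : NelsonInterp Atom) (w : I.W) : Formula Atom → Prop
    | .bot => True
    | .atom a => a ∈ I.Vm w
    | .sneg φ => forceP I w φ
    | .conj φ ψ => forceM I w φ ∨ forceM I w ψ
    | .disj φ ψ => forceM I w φ ∧ forceM I w ψ
    | .impl φ ψ => forceP I w φ ∧ forceM I w ψ
end

def Formula.neg {Atom : Type} (φ : Formula Atom) : Formula Atom := φ.impl .bot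

def Formula.supImp {Atom : Type} (φ ψ : Formula Atom) : Formula Atom :=
  ((φ.sneg.neg).conj φ).impl ψ

def Formula.attack {Atom : Type} (φ ψ : Formula Atom) : Formula Atom :=
  φ.supImp ψ.sneg

/-- cw-inference at a world: `I,w ⊨ φ` iff `I,w ⊩⁺ ¬~φ ∧ φ`. -/
def cw {Atom : Type} (I : NelsonInterp Atom) (w : I.W) (φ : Formula Atom) : Prop :=
  forceP I w ((φ.sneg.neg).conj φ)

/-- `I ⊩⁺ φ` : forcing at all worlds. -/
def forcedP {Atom : Type} (I : NelsonInterp Atom) (φ : Formula Atom) : Prop :=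
  ∀ w, forceP I w φ

def forcedM {Atom : Type} (I : NelsonInterp Atom) (φ : Formula Atom) : Prop :=
  ∀ w, forceM I w φ

/-- `I ⊨ φ` : cw-inference at all worlds. -/
def cwAll {Atom : Type} (I : NelsonInterp Atom) (φ : Formula Atom) : Prop :=
  ∀ w, cw I w φ

def NelsonInterp.Consistent {Atom : Type} (I : NelsonInterp Atom) : Prop :=
  ∀ w, I.Vp w ∩ I.Vm w = ∅

/-- An HT-interpretation: two worlds h ≤ t, given by four sets of atoms. -/
structure HTInterp (Atom : Type) where
  Hp : Set Atom
  Hm : Set Atom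
  Tp : Set Atom
  Tm : Set Atom
  subP : Hp ⊆ Tp
  subM : Hm ⊆ Tm

/-- The underlying Nelson interpretation: world `false` is h, world `true` is t. -/
def HTInterp.toNelson {Atom : Type} (I : HTInterp Atom) : NelsonInterp Atom where
  W := Bool
  le := (· ≤ ·)
  refl := le_refl
  trans := le_trans
  Vp := fun w => if w then I.Tp else I.Hp
  Vm := fun w => if w then I.Tm else I.Hm
  monoP := by
    intro w w' hle
    match w, w', hle with
    | false, false, _ => exact subset_rfl
    | false, true, _ => exact I.subP
    | true, true, _ => exact subset_rfl
    | true, false, h => exact absurd h (by decide)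
  monoM := by
    intro w w' hle
    match w, w', hle with
    | false, false, _ => exact subset_rfl
    | false, true, _ => exact I.subM
    | true, true, _ => exact subset_rfl
    | true, false, h => exact absurd h (by decide)


def isHTModel {Atom : Type} (I : HTInterp Atom) (Γ : Set (Formula Atom)) : Prop :=
  ∀ φ ∈ Γ, ∀ w : Bool, forceP I.toNelson w φ

/-- The arguments consistently accepted by `I` among the arguments `A`. -/
def SI {Atom : Type} (I : HTInterp Atom) (A : Set Atom) : Set Atom :=
  { a ∈ A | cwAll I.toNelson (Formula.atom a) }

/-- `I` is total and a ≤-minimal HT-model among models with the same `t`-valuations. -/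
def Equilibrium {Atom : Type} (I : HTInterp Atom) (Γ : Set (Formula Atom)) : Prop :=
  I.Hp = I.Tp ∧ I.Hm = I.Tm ∧ isHTModel I Γ ∧
    ∀ J : HTInterp Atom, J.Tp = I.Tp → J.Tm = I.Tm → isHTModel J Γ →
      J.Hp = I.Tp ∧ J.Hm = I.Tm

/-- Translation of the Dung framework `(A, R)`. -/
def ThAF {Atom : Type} (A : Set Atom) (R : Atom → Atom → Prop) : Set (Formula Atom) :=
  (Formula.atom '' A) ∪
    { f | ∃ a b, R a b ∧ f = (Formula.atom a).attack (Formula.atom b) }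

def Defeated {Atom : Type} (R : Atom → Atom → Prop) (S : Set Atom) : Set Atom :=
  { a | ∃ b ∈ S, R b a }

/-! In an HT-interpretation, `I ⊨ a` means `a ∈ Hp` and `a ∉ Tm`, and `a ↣ b` asks, world by
world, that an argument accepted there have `b` refuted there. So in a model of `Γ_AF` we get
`S_I = A \ Tm`, and every argument defeated by `S_I` lies in `Tm`. Conversely, shrinking `Hm` to
`Defeated(S_I) ∩ Tm` still gives a model of `Γ_AF`, so minimality of an equilibrium model forces
`Tm = Defeated(S_I)`. -/

namespace HTInterp

variable {Atom : Type} (I : HTInterp Atom)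

@[simp]
lemma forall_toNelson_W (p : I.toNelson.W → Prop) : (∀ w, p w) ↔ p false ∧ p true :=
  Bool.forall_bool

@[simp]
lemma toNelson_le (w w' : Bool) : I.toNelson.le w w' ↔ w ≤ w' := Iff.rfl

@[simp]
lemma toNelson_Vp (w : Bool) : I.toNelson.Vp w = if w then I.Tp else I.Hp := rfl

@[simp]
lemma toNelson_Vm (w : Bool) : I.toNelson.Vm w = if w then I.Tm else I.Hm := rfl

lemma forceP_atom_forall_iff (a : Atom) :
    (∀ w : Bool, forceP I.toNelson w (.atom a)) ↔ a ∈ I.Hp := by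
  simpa [forceP] using fun h => I.subP h

lemma cwAll_atom_iff (a : Atom) : cwAll I.toNelson (.atom a) ↔ a ∈ I.Hp ∧ a ∉ I.Tm := by
  have hP := @I.subP a
  have hM := @I.subM a
  simp [cwAll, cw, Formula.neg, forceP, forceM]
  tauto

lemma forceP_attack_forall_iff (a b : Atom) :
    (∀ w : Bool, forceP I.toNelson w ((Formula.atom a).attack (.atom b))) ↔
      (a ∈ I.Hp → a ∉ I.Tm → b ∈ I.Hm) ∧ (a ∈ I.Tp → a ∉ I.Tm → b ∈ I.Tm) := by
  have hP := @I.subP a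
  have hM := @I.subM a
  simp [Formula.attack, Formula.supImp, Formula.neg, forceP, forceM]
  tauto

end HTInterp

section Argumentation

variable {Atom : Type} {A : Set Atom} {R : Atom → Atom → Prop} {I : HTInterp Atom}

lemma isHTModel_ThAF_iff :
    isHTModel I (ThAF A R) ↔ A ⊆ I.Hp ∧ ∀ a b, R a b →
      (a ∈ I.Hp → a ∉ I.Tm → b ∈ I.Hm) ∧ (a ∈ I.Tp → a ∉ I.Tm → b ∈ I.Tm) := by
  simp only [isHTModel, ThAF, Set.mem_union, or_imp, forall_and, Set.forall_mem_image,
    Set.mem_ofPred_eq, I.forceP_atom_forall_iff, ← I.forceP_attack_forall_iff]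
  refine and_congr Iff.rfl ⟨fun h a b hab => h _ ⟨a, b, hab, rfl⟩, ?_⟩
  rintro h _ ⟨a, b, hab, rfl⟩
  exact h a b hab

lemma SI_eq_diff_Tm (hA : A ⊆ I.Hp) : SI I A = A \ I.Tm := by
  ext a
  simp only [SI, Set.mem_ofPred_eq, I.cwAll_atom_iff, Set.mem_sdiff]
  exact ⟨fun h => ⟨h.1, h.2.2⟩, fun h => ⟨h.1, hA h.1, h.2⟩⟩

lemma defeated_SI_subset_Tm (hI : isHTModel I (ThAF A R)) : Defeated R (SI I A) ⊆ I.Tm := by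
  rintro a ⟨b, ⟨-, hb⟩, hba⟩
  rw [I.cwAll_atom_iff] at hb
  exact ((isHTModel_ThAF_iff.mp hI).2 b a hba).2 (I.subP hb.1) hb.2

lemma Equilibrium.Tm_subset_defeated_SI (hR : ∀ a b, R a b → a ∈ A ∧ b ∈ A)
    (hI : Equilibrium I (ThAF A R)) : I.Tm ⊆ Defeated R (SI I A) := by
  obtain ⟨hHp, -, hModel, hMin⟩ := hI
  obtain ⟨hA, hAttack⟩ := isHTModel_ThAF_iff.mp hModel
  let J : HTInterp Atom :=
    ⟨I.Tp, Defeated R (SI I A) ∩ I.Tm, I.Tp, I.Tm, subset_rfl, Set.inter_subset_right⟩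
  have hJ : isHTModel J (ThAF A R) := by
    refine isHTModel_ThAF_iff.mpr
      ⟨show A ⊆ I.Tp from hHp ▸ hA, fun a b hab => ⟨fun ha hna => ?_, (hAttack a b hab).2⟩⟩
    have haS : a ∈ SI I A := (SI_eq_diff_Tm hA).symm ▸ ⟨(hR a b hab).1, hna⟩
    exact ⟨⟨a, haS, hab⟩, (hAttack a b hab).2 ha hna⟩
  exact Set.inter_eq_right.mp (hMin J rfl rfl hJ).2

end Argumentation

theorem af_equilibrium_to_stable {Atom : Type} (A : Set Atom)
    (R : Atom → Atom → Prop) (hR : ∀ a b, R a b → a ∈ A ∧ b ∈ A)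
    (I : HTInterp Atom) (hEq : Equilibrium I (ThAF A R)) :
    SI I A = A \ Defeated R (SI I A) := by
  have hModel := hEq.2.2.1
  have hTm : I.Tm = Defeated R (SI I A) :=
    (hEq.Tm_subset_defeated_SI hR).antisymm (defeated_SI_subset_Tm hModel)
  calc SI I A = A \ I.Tm := SI_eq_diff_Tm (isHTModel_ThAF_iff.mp hModel).1
    _ = A \ Defeated R (SI I A) := by rw [hTm]
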